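/- Let 0 < σ ≤ R, let M ≥ 0, and let Φ : ℝ → ℝ be an even function satisfying Φ(x) = 0 whenever |x| > R and |Φ(x)| ≤ M whenever σ ≤ |x| ≤ R. Then for any real numbers q₁, …, q_n with |q_i − q_j| ≥ σ for all i ≠ j, one has |∑_{1 ≤ i < j ≤ n} Φ(q_i − q_j)| ≤ n · M · ⌊R/σ⌋, where ⌊R/σ⌋ is the integer part of R/σ. -/

import Mathlib

open Finset

/-- Counting lemma: σ-separated points lying in (x+σ-ish, x+R] number at most ⌊R/σ⌋. -/
lemma card_between (σ R : ℝ) (hσ : 0 < σ) {n : ℕ} (q : Fin n → ℝ)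
    (hsep : ∀ i j : Fin n, i ≠ j → σ ≤ |q i - q j|) (x : ℝ) :
    (univ.filter (fun j => σ ≤ q j - x ∧ q j - x ≤ R)).card ≤ Nat.floor (R / σ) := by
  classical
  have h : (univ.filter (fun j => σ ≤ q j - x ∧ q j - x ≤ R)).card
      ≤ (Finset.Icc 1 (Nat.floor (R/σ))).card := by
    apply Finset.card_le_card_of_injOn (fun j => Nat.floor ((q j - x)/σ))
    · intro j hj
      simp only [mem_coe, mem_filter, mem_univ, true_and] at hj ⊢
      obtain ⟨h1, h2⟩ := hj
      have ha : (1:ℝ) ≤ (q j - x)/σ := (le_div_iff₀ hσ).2 (by linarith)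
      have hb : (q j - x)/σ ≤ R/σ := by gcongr
      rw [Finset.mem_Icc]
      constructor
      · exact Nat.le_floor (by exact_mod_cast ha)
      · exact Nat.floor_le_floor hb
    · intro j hj j' hj' hfe
      by_contra hne
      simp only [coe_filter, Set.mem_setOf_eq, mem_univ, true_and] at hj hj'
      have hsep' := hsep j j' hne
      set a := (q j - x)/σ with ha
      set b := (q j' - x)/σ with hb
      have ha0 : (0:ℝ) ≤ a := by
        have : (1:ℝ) ≤ a := (le_div_iff₀ hσ).2 (by linarith [hj.1])
        linarith
      have hb0 : (0:ℝ) ≤ b := by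
        have : (1:ℝ) ≤ b := (le_div_iff₀ hσ).2 (by linarith [hj'.1])
        linarith
      have h1 : (Nat.floor a : ℝ) ≤ a := Nat.floor_le ha0
      have h2 : a < Nat.floor a + 1 := Nat.lt_floor_add_one a
      have h3 : (Nat.floor b : ℝ) ≤ b := Nat.floor_le hb0
      have h4 : b < Nat.floor b + 1 := Nat.lt_floor_add_one b
      have hfe' : (Nat.floor a : ℝ) = (Nat.floor b : ℝ) := by exact_mod_cast hfe
      have habs : |a - b| < 1 := by
        rw [abs_sub_lt_iff]; constructor <;> linarith
      have hqq : q j - q j' = σ * (a - b) := by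
        rw [ha, hb]; field_simp; ring
      have : |q j - q j'| < σ := by
        rw [hqq, abs_mul, abs_of_pos hσ]
        calc σ * |a - b| < σ * 1 := by
              exact mul_lt_mul_of_pos_left habs hσ
          _ = σ := mul_one σ
      linarith [hsep']
  simpa [Nat.card_Icc] using h

/-- Estimate (2) of the paper: the total potential energy of an admissible
hard-sphere configuration is bounded by `n · M · ⌊R/σ⌋`. -/
theorem abs_total_potential_energy_le
    (σ R M : ℝ) (hσ : 0 < σ) (hσR : σ ≤ R) (hM : 0 ≤ M)
    (Φ : ℝ → ℝ)
    (heven : ∀ x : ℝ, Φ (-x) = Φ x)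
    (hsupp : ∀ x : ℝ, R < |x| → Φ x = 0)
    (hbound : ∀ x : ℝ, σ ≤ |x| → |x| ≤ R → |Φ x| ≤ M)
    (n : ℕ) (q : Fin n → ℝ)
    (hsep : ∀ i j : Fin n, i ≠ j → σ ≤ |q i - q j|) :
    |∑ p ∈ Finset.univ.filter (fun p : Fin n × Fin n => p.1 < p.2), Φ (q p.1 - q p.2)|
      ≤ (n : ℝ) * M * (Nat.floor (R / σ) : ℝ) := by
  classical
  set K : ℕ := Nat.floor (R / σ) with hK
  set F : Fin n → Fin n → ℝ := fun i j => |Φ (q i - q j)| with hF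
  have hFsymm : ∀ i j, F i j = F j i := by
    intro i j
    simp only [hF]
    rw [show q j - q i = -(q i - q j) by ring, heven]
  -- step 1 : triangle inequality
  have step1 : |∑ p ∈ Finset.univ.filter (fun p : Fin n × Fin n => p.1 < p.2), Φ (q p.1 - q p.2)|
      ≤ ∑ p ∈ Finset.univ.filter (fun p : Fin n × Fin n => p.1 < p.2), F p.1 p.2 :=
    Finset.abs_sum_le_sum_abs _ _
  -- inner bound: for each i, sum over j ≠ i of F i j ≤ 2 * M * K
  have inner : ∀ i : Fin n,
      ∑ j ∈ univ.filter (fun j => i ≠ j), F i j ≤ 2 * (M * K) := by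
    intro i
    set T : Finset (Fin n) := univ.filter (fun j => i ≠ j ∧ |q i - q j| ≤ R) with hT
    have hzero : ∑ j ∈ univ.filter (fun j => i ≠ j), F i j = ∑ j ∈ T, F i j := by
      apply (Finset.sum_subset _ _).symm
      · intro j hj
        simp only [hT, mem_filter, mem_univ, true_and] at hj ⊢
        exact hj.1
      · intro j hj hjT
        simp only [hT, mem_filter, mem_univ, true_and] at hj hjT
        have hR : R < |q i - q j| := by
          by_contra hle
          push_neg at hle
          exact hjT ⟨hj, hle⟩
        simp [hF, hsupp _ hR]
    have hcardT : T.card ≤ 2 * K := by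
      have hsub : T ⊆ (univ.filter (fun j => σ ≤ q j - q i ∧ q j - q i ≤ R)) ∪
          (univ.filter (fun j => σ ≤ (-q) j - (-q) i ∧ (-q) j - (-q) i ≤ R)) := by
        intro j hj
        simp only [hT, mem_filter, mem_univ, true_and] at hj
        obtain ⟨hne, hle⟩ := hj
        have hs := hsep i j hne
        rw [mem_union]
        rcases abs_cases (q i - q j) with ⟨heq, _⟩ | ⟨heq, _⟩
        · right
          simp only [mem_filter, mem_univ, true_and, Pi.neg_apply]
          constructor <;> linarith [hs, hle, heq.symm ▸ hs]
        · left
          simp only [mem_filter, mem_univ, true_and]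
          constructor <;> linarith [hs, hle]
      calc T.card ≤ _ := Finset.card_le_card hsub
        _ ≤ _ + _ := Finset.card_union_le _ _
        _ ≤ K + K := by
            gcongr
            · exact card_between σ R hσ q hsep (q i)
            · refine card_between σ R hσ (-q) ?_ (-q i)
              intro a b hab
              rw [Pi.neg_apply, Pi.neg_apply, neg_sub_neg, abs_sub_comm]
              exact hsep a b hab
        _ = 2 * K := by ring
    have hterm : ∀ j ∈ T, F i j ≤ M := by
      intro j hj
      simp only [hT, mem_filter, mem_univ, true_and] at hj
      exact hbound _ (hsep i j hj.1) hj.2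
    calc ∑ j ∈ univ.filter (fun j => i ≠ j), F i j = ∑ j ∈ T, F i j := hzero
      _ ≤ T.card • M := Finset.sum_le_card_nsmul _ _ _ hterm
      _ = (T.card : ℝ) * M := by rw [nsmul_eq_mul]
      _ ≤ (2 * K : ℕ) * M := by
          have hc : (T.card : ℝ) ≤ ((2 * K : ℕ) : ℝ) := by exact_mod_cast hcardT
          exact mul_le_mul_of_nonneg_right hc hM
      _ = 2 * (M * K) := by push_cast; ring
  -- symmetrization
  have hswap : ∑ p ∈ Finset.univ.filter (fun p : Fin n × Fin n => p.2 < p.1), F p.1 p.2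
      = ∑ p ∈ Finset.univ.filter (fun p : Fin n × Fin n => p.1 < p.2), F p.1 p.2 := by
    apply Finset.sum_nbij' (fun p => Prod.swap p) (fun p => Prod.swap p)
    · intro p hp; simp only [mem_filter, mem_univ, true_and] at hp ⊢; exact hp
    · intro p hp; simp only [mem_filter, mem_univ, true_and] at hp ⊢; exact hp
    · intro p _; simp
    · intro p _; simp
    · intro p _; exact hFsymm p.1 p.2
  have hsplit : ∑ p ∈ Finset.univ.filter (fun p : Fin n × Fin n => p.1 ≠ p.2), F p.1 p.2
      = 2 * ∑ p ∈ Finset.univ.filter (fun p : Fin n × Fin n => p.1 < p.2), F p.1 p.2 := by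
    have h1 : (Finset.univ.filter (fun p : Fin n × Fin n => p.1 ≠ p.2))
        = (Finset.univ.filter (fun p : Fin n × Fin n => p.1 < p.2)) ∪
          (Finset.univ.filter (fun p : Fin n × Fin n => p.2 < p.1)) := by
      ext p
      simp only [mem_filter, mem_univ, true_and, mem_union]
      constructor
      · intro h; exact lt_or_gt_of_ne h
      · rintro (h | h)
        · exact ne_of_lt h
        · exact ne_of_gt h
    rw [h1, Finset.sum_union, hswap]
    · ring
    · rw [Finset.disjoint_filter]
      intro p _ h1 h2
      exact absurd h2 (not_lt_of_gt h1)
  have hfull : ∑ p ∈ Finset.univ.filter (fun p : Fin n × Fin n => p.1 ≠ p.2), F p.1 p.2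
      = ∑ i : Fin n, ∑ j ∈ univ.filter (fun j => i ≠ j), F i j := by
    rw [Finset.sum_filter]
    rw [Fintype.sum_prod_type]
    congr 1
    ext i
    rw [Finset.sum_filter]
  have hbig : ∑ p ∈ Finset.univ.filter (fun p : Fin n × Fin n => p.1 ≠ p.2), F p.1 p.2
      ≤ (n : ℝ) * (2 * (M * K)) := by
    rw [hfull]
    calc _ ≤ ∑ _i : Fin n, 2 * (M * K) := Finset.sum_le_sum (fun i _ => inner i)
      _ = (n : ℝ) * (2 * (M * K)) := by simp [mul_comm]
  have hhalf : ∑ p ∈ Finset.univ.filter (fun p : Fin n × Fin n => p.1 < p.2), F p.1 p.2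
      ≤ (n : ℝ) * M * K := by nlinarith [hsplit, hbig]
  linarith [step1, hhalf]
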